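/- Let H₀ be symmetric positive definite, d ∈ R^N, 0 ≤ β₀ < β₁, y, ŷ ∈ R. Set H = H₀ + β₀ddᵀ, H' = H₀ + β₁ddᵀ, g = H₀⁻¹d, σ_H² = dᵀg, b' = b + (β₁−β₀)dy, v = H⁻¹(b − λe), v' = H'⁻¹(b' − λe), ŷ = dᵀv. Then v' = v + ((β₁−β₀)/(1 + σ_H²β₁)) (y − ŷ) g. -/

import Mathlib

open Matrix

lemma vecMulVec_mulVec' {N : ℕ} (w v x : Fin N → ℝ) :
    (vecMulVec w v).mulVec x = (v ⬝ᵥ x) • w := by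
  ext i
  simp [vecMulVec, mulVec, dotProduct, Finset.mul_sum, mul_comm, mul_left_comm]

lemma smul_vecMulVec_posSemidef {N : ℕ} (β : ℝ) (hβ : 0 ≤ β) (d : Fin N → ℝ) :
    (β • vecMulVec d d).PosSemidef := by
  refine posSemidef_iff_dotProduct_mulVec.mpr ⟨?_, ?_⟩
  · ext i j; simp [vecMulVec, IsHermitian, conjTranspose, mul_comm]
  · intro x
    rw [smul_mulVec, vecMulVec_mulVec', dotProduct_smul, dotProduct_smul]
    have : x ⬝ᵥ d = d ⬝ᵥ x := dotProduct_comm _ _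
    simp only [smul_eq_mul, star_trivial, this]
    exact mul_nonneg hβ (mul_self_nonneg _)

theorem homotopy_online_update (N : ℕ) (H0 : Matrix (Fin N) (Fin N) ℝ)
    (hH0 : H0.PosDef) (d b e : Fin N → ℝ) (lam y : ℝ)
    (β0 β1 : ℝ) (hβ0 : 0 ≤ β0) (hβ : β0 < β1)
    (H H' : Matrix (Fin N) (Fin N) ℝ)
    (hH : H = H0 + β0 • vecMulVec d d) (hH' : H' = H0 + β1 • vecMulVec d d)
    (g : Fin N → ℝ) (hg : g = H0⁻¹.mulVec d)
    (σH2 : ℝ) (hσ : σH2 = d ⬝ᵥ g)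
    (b' : Fin N → ℝ) (hb' : b' = b + ((β1 - β0) * y) • d)
    (v v' : Fin N → ℝ)
    (hv : v = H⁻¹.mulVec (b - lam • e)) (hv' : v' = H'⁻¹.mulVec (b' - lam • e))
    (yhat : ℝ) (hyhat : yhat = d ⬝ᵥ v) :
    v' = v + ((β1 - β0) / (1 + σH2 * β1) * (y - yhat)) • g := by
  have hβ1 : 0 ≤ β1 := le_trans hβ0 hβ.le
  have hHpd : H.PosDef := hH ▸ hH0.add_posSemidef (smul_vecMulVec_posSemidef β0 hβ0 d)
  have hH'pd : H'.PosDef := hH' ▸ hH0.add_posSemidef (smul_vecMulVec_posSemidef β1 hβ1 d)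
  have hσnn : 0 ≤ σH2 := by
    have := hH0.inv.posSemidef.dotProduct_mulVec_nonneg d
    simpa [hσ, hg] using this
  have hden : 1 + σH2 * β1 > 0 := by positivity
  -- H0 *ᵥ g = d
  have hH0g : H0.mulVec g = d := by
    rw [hg, mulVec_mulVec]
    have := hH0.isUnit
    rw [mul_nonsing_inv _ (isUnit_iff_isUnit_det _ |>.1 this), one_mulVec]
  -- H *ᵥ v = b - lam • e
  have hHv : H.mulVec v = b - lam • e := by
    rw [hv, mulVec_mulVec]
    have := hHpd.isUnit
    rw [mul_nonsing_inv _ (isUnit_iff_isUnit_det _ |>.1 this), one_mulVec]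
  set c : ℝ := (β1 - β0) / (1 + σH2 * β1) * (y - yhat) with hc
  have key : H'.mulVec (v + c • g) = b' - lam • e := by
    have hc' : c * (1 + σH2 * β1) = (β1 - β0) * (y - yhat) := by
      rw [hc]; field_simp
    have hHv' : H.mulVec v = H0.mulVec v + (β0 * yhat) • d := by
      rw [hH, add_mulVec, smul_mulVec, vecMulVec_mulVec', ← hyhat, smul_smul]
    simp only [hH', add_mulVec, mulVec_add, mulVec_smul, smul_mulVec,
      vecMulVec_mulVec', hH0g]
    have hH0v : H0.mulVec v = (b - lam • e) - (β0 * yhat) • d := by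
      rw [← hHv, hHv']; abel
    rw [hH0v, ← hyhat, ← hσ, hb']
    ext i
    simp only [Pi.add_apply, Pi.sub_apply, Pi.smul_apply, smul_eq_mul]
    linear_combination (d i) * hc'
  have := hH'pd.isUnit
  rw [hv', ← key, mulVec_mulVec, nonsing_inv_mul _ (isUnit_iff_isUnit_det _ |>.1 this), one_mulVec]
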